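/- Let G be the GTS with states {s, q}, L(s) = {a}, L(q) = {¬a}, may transitions s → s and s → q, and must hypertransition s R⁺ {s, q}. Then there is no KMTS state ⟨M, s_M⟩ whose set of Kripke-Structure concretisations (states related to s_M by some mixed simulation) equals the set of concretisations of ⟨G, s⟩. Hence GTSs are strictly more expressive than KMTSs. -/

import Mathlib

set_option autoImplicit true
set_option maxHeartbeats 800000

structure GTS (σ : Type) (α : Type) where
  init : Set σ
  may : σ → σ → Prop
  must : σ → Set σ → Prop
  labT : σ → α → Prop
  labF : σ → α → Prop
  must_may : ∀ s A, must s A → ∀ t ∈ A, may s t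
  lab_con : ∀ s p, ¬ (labT s p ∧ labF s p)

/-- `H` is a mixed simulation from `M₁` to `M₂`. -/
def IsMixedSim (M₁ : GTS σ₁ α) (M₂ : GTS σ₂ α) (H : σ₁ → σ₂ → Prop) : Prop :=
  ∀ s₁ s₂, H s₁ s₂ →
    ((∀ p, M₂.labT s₂ p → M₁.labT s₁ p) ∧ (∀ p, M₂.labF s₂ p → M₁.labF s₁ p)) ∧
    (∀ s₁', M₁.may s₁ s₁' → ∃ s₂', M₂.may s₂ s₂' ∧ H s₁' s₂') ∧
    (∀ A₂, M₂.must s₂ A₂ → ∃ A₁, M₁.must s₁ A₁ ∧ ∀ s₁' ∈ A₁, ∃ s₂' ∈ A₂, H s₁' s₂')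

/-- `⟨M₁,s₁⟩ ≤_mix ⟨M₂,s₂⟩`. -/
def MixLe (M₁ : GTS σ₁ α) (s₁ : σ₁) (M₂ : GTS σ₂ α) (s₂ : σ₂) : Prop :=
  ∃ H, IsMixedSim M₁ M₂ H ∧ H s₁ s₂

/-- A Kripke Structure viewed as a GTS: complete labelling, and must
hypertransitions are exactly the singleton may transitions. -/
def IsKS (M : GTS σ α) : Prop :=
  (∀ s p, M.labT s p ∨ M.labF s p) ∧
  (∀ s A, M.must s A ↔ ∃ t, A = {t} ∧ M.may s t)

/-- A KMTS is a GTS whose must hypertransitions all have singleton targets. -/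
def IsKMTS (M : GTS σ α) : Prop :=
  ∀ s A, M.must s A → ∃ t, A = ({t} : Set σ)

/-- States of the GTS `G`. -/
inductive GS | s | q
deriving DecidableEq

/-- The GTS `G`: `L(s) = {a}`, `L(q) = {¬a}`, may transitions `s → s`, `s → q`,
and must hypertransition `s R⁺ {s, q}`.  The atomic proposition `a` is `()`. -/
def G : GTS GS Unit where
  init := {GS.s}
  may x _ := x = GS.s
  must x A := x = GS.s ∧ A = Set.univ
  labT x _ := x = GS.s
  labF x _ := x = GS.q
  must_may := by rintro x A ⟨rfl, rfl⟩ t _; rfl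
  lab_con := by rintro x p ⟨h1, h2⟩; subst h1; exact GS.noConfusion h2

/-!
The `a`-loop and `a → ¬a` concretise `⟨G, s⟩`, hence also `⟨M, sM⟩`.  The `a`-loop then forbids
`¬a` at `sM` and at its must-successors, and `a → ¬a` forces every must-successor of `sM` to
have no must hypertransitions.  If `sM` has no must hypertransition, the deadlocked `a`-state
concretises `⟨M, sM⟩`; otherwise, `M` being a KMTS, its must hypertransitions are single edges
`sM → t`, and `a → a` (with `a` at the deadlocked end) concretises `⟨M, sM⟩`.  Neither
concretises `⟨G, s⟩`: matching `s R⁺ {s, q}` needs a must-successor that is labelled `¬a` or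
again has a must hypertransition.
-/

variable {σ σ₁ σ₂ α : Type}

def MixTransfer (M₁ : GTS σ₁ α) (M₂ : GTS σ₂ α) (H : σ₁ → σ₂ → Prop) (s₁ : σ₁) (s₂ : σ₂) :
    Prop :=
  ((∀ p, M₂.labT s₂ p → M₁.labT s₁ p) ∧ (∀ p, M₂.labF s₂ p → M₁.labF s₁ p)) ∧
    (∀ s₁', M₁.may s₁ s₁' → ∃ s₂', M₂.may s₂ s₂' ∧ H s₁' s₂') ∧
    (∀ A₂, M₂.must s₂ A₂ → ∃ A₁, M₁.must s₁ A₁ ∧ ∀ s₁' ∈ A₁, ∃ s₂' ∈ A₂, H s₁' s₂')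

section MixedSimulation

variable {M₁ : GTS σ₁ α} {M₂ : GTS σ₂ α} {H H' : σ₁ → σ₂ → Prop} {s₁ : σ₁} {s₂ : σ₂}

theorem MixTransfer.mono (hH : ∀ x y, H x y → H' x y) (h : MixTransfer M₁ M₂ H s₁ s₂) :
    MixTransfer M₁ M₂ H' s₁ s₂ := by
  obtain ⟨hlab, hmay, hmust⟩ := h
  refine ⟨hlab, fun s₁' h' => ?_, fun A₂ h' => ?_⟩
  · obtain ⟨s₂', hs₂', hH'⟩ := hmay s₁' h'
    exact ⟨s₂', hs₂', hH _ _ hH'⟩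
  · obtain ⟨A₁, hA₁, hmatch⟩ := hmust A₂ h'
    refine ⟨A₁, hA₁, fun s₁' hs₁' => ?_⟩
    obtain ⟨s₂', hs₂', hH'⟩ := hmatch s₁' hs₁'
    exact ⟨s₂', hs₂', hH _ _ hH'⟩

theorem MixLe.transfer (h : MixLe M₁ s₁ M₂ s₂) :
    MixTransfer M₁ M₂ (fun x y => MixLe M₁ x M₂ y) s₁ s₂ := by
  obtain ⟨H, hH, hs⟩ := h
  exact MixTransfer.mono (fun x y hxy => ⟨H, hH, hxy⟩) (hH s₁ s₂ hs)

/-- Coinduction up to `≤_mix`. -/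
theorem mixLe_of_transfer (h : MixTransfer M₁ M₂ (fun x y => MixLe M₁ x M₂ y) s₁ s₂) :
    MixLe M₁ s₁ M₂ s₂ := by
  refine ⟨fun x y => (x = s₁ ∧ y = s₂) ∨ MixLe M₁ x M₂ y, ?_, .inl ⟨rfl, rfl⟩⟩
  rintro x y (⟨rfl, rfl⟩ | hxy)
  · exact h.mono fun _ _ => .inr
  · exact hxy.transfer.mono fun _ _ => .inr

theorem MixLe.labF (h : MixLe M₁ s₁ M₂ s₂) {p : α} (hp : M₂.labF s₂ p) : M₁.labF s₁ p :=
  h.transfer.1.2 p hp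

theorem MixLe.exists_must (h : MixLe M₁ s₁ M₂ s₂) {A₂ : Set σ₂} (hA₂ : M₂.must s₂ A₂) :
    ∃ A₁, M₁.must s₁ A₁ ∧ ∀ s₁' ∈ A₁, ∃ s₂' ∈ A₂, MixLe M₁ s₁' M₂ s₂' :=
  h.transfer.2.2 A₂ hA₂

theorem MixLe.not_must (h : MixLe M₁ s₁ M₂ s₂) (h₁ : ∀ A, ¬ M₁.must s₁ A) (A₂ : Set σ₂) :
    ¬ M₂.must s₂ A₂ := fun hA₂ =>
  let ⟨A₁, hA₁, _⟩ := h.exists_must hA₂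
  h₁ A₁ hA₁

theorem mixLe_of_deadlock (hlabT : ∀ p, M₂.labT s₂ p → M₁.labT s₁ p)
    (hlabF : ∀ p, M₂.labF s₂ p → M₁.labF s₁ p) (hmay : ∀ s₁', ¬ M₁.may s₁ s₁')
    (hmust : ∀ A₂, ¬ M₂.must s₂ A₂) : MixLe M₁ s₁ M₂ s₂ :=
  mixLe_of_transfer ⟨⟨hlabT, hlabF⟩, fun s₁' h => (hmay s₁' h).elim,
    fun A₂ h => (hmust A₂ h).elim⟩

end MixedSimulation

def GTS.ofKripke (R : σ → σ → Prop) (L : σ → α → Prop) : GTS σ α where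
  init := Set.univ
  may := R
  must s A := ∃ t, A = {t} ∧ R s t
  labT := L
  labF s p := ¬ L s p
  must_may := by rintro s A ⟨t, rfl, hst⟩ u rfl; exact hst
  lab_con _ _ h := h.2 h.1

theorem GTS.isKS_ofKripke (R : σ → σ → Prop) (L : σ → α → Prop) :
    IsKS (GTS.ofKripke R L) :=
  ⟨fun s p => em (L s p), fun _ _ => Iff.rfl⟩

def loopA : GTS Unit Unit := .ofKripke (fun _ _ => True) (fun _ _ => True)

def deadA : GTS Unit Unit := .ofKripke (fun _ _ => False) (fun _ _ => True)

def aToNotA : GTS Bool Unit := .ofKripke (fun x y => x = true ∧ y = false) (fun x _ => x = true)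

def aToA : GTS Bool Unit := .ofKripke (fun x y => x = true ∧ y = false) (fun _ _ => True)

theorem loopA_le_G : MixLe loopA () G .s := by
  refine ⟨fun _ y => y = .s, ?_, rfl⟩
  rintro _ _ rfl
  refine ⟨⟨fun _ _ => trivial, fun _ h => GS.noConfusion h⟩, fun _ _ => ⟨.s, rfl, rfl⟩, ?_⟩
  rintro _ ⟨-, rfl⟩
  exact ⟨{()}, ⟨(), rfl, trivial⟩, fun _ _ => ⟨.s, trivial, rfl⟩⟩

theorem aToNotA_le_G : MixLe aToNotA true G .s := by
  have hq : MixLe aToNotA false G .q :=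
    mixLe_of_deadlock (fun _ h => GS.noConfusion h) (fun _ _ => Bool.noConfusion)
      (fun _ h => Bool.noConfusion h.1) (fun _ h => GS.noConfusion h.1)
  refine mixLe_of_transfer ⟨⟨fun _ _ => rfl, fun _ h => GS.noConfusion h⟩, ?_, ?_⟩
  · rintro _ ⟨-, rfl⟩
    exact ⟨.q, rfl, hq⟩
  · rintro _ ⟨-, rfl⟩
    exact ⟨{false}, ⟨false, rfl, rfl, rfl⟩, fun _ h => ⟨.q, trivial, h ▸ hq⟩⟩

theorem deadA_not_le_G : ¬ MixLe deadA () G .s := fun h =>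
  h.not_must (fun _ ⟨_, _, hR⟩ => hR) _ ⟨rfl, rfl⟩

theorem aToA_not_le_G : ¬ MixLe aToA true G .s := by
  intro h
  obtain ⟨_, ⟨_, rfl, -, rfl⟩, hmatch⟩ := h.exists_must (A₂ := Set.univ) ⟨rfl, rfl⟩
  obtain ⟨y, -, hy⟩ := hmatch false rfl
  cases y with
  | s => exact hy.not_must (fun _ ⟨_, _, hR, _⟩ => Bool.noConfusion hR) _ ⟨rfl, rfl⟩
  | q => exact hy.labF (p := ()) rfl trivial

section KMTS

variable {M : GTS σ Unit} {m t : σ}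

/-- `loopA` rules out `¬a` at `t`, and `aToNotA` rules out must hypertransitions from `t`. -/
theorem aToA_false_le_of_must (h₁ : MixLe loopA () M m) (h₂ : MixLe aToNotA true M m)
    (ht : M.must m {t}) : MixLe aToA false M t := by
  have hloop : MixLe loopA () M t := by
    obtain ⟨_, ⟨_, rfl, -⟩, hmatch⟩ := h₁.exists_must ht
    obtain ⟨_, rfl, h⟩ := hmatch () rfl
    exact h
  have hnotA : MixLe aToNotA false M t := by
    obtain ⟨_, ⟨_, rfl, -, rfl⟩, hmatch⟩ := h₂.exists_must ht
    obtain ⟨_, rfl, h⟩ := hmatch false rfl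
    exact h
  exact mixLe_of_deadlock (fun _ _ => trivial) (fun _ hp => (hloop.labF hp trivial).elim)
    (fun _ h => Bool.noConfusion h.1)
    (hnotA.not_must fun _ ⟨_, _, hR, _⟩ => Bool.noConfusion hR)

theorem aToA_le_of_must (hM : IsKMTS M) (h₁ : MixLe loopA () M m)
    (h₂ : MixLe aToNotA true M m) (hmust : ∃ A, M.must m A) : MixLe aToA true M m := by
  refine mixLe_of_transfer
    ⟨⟨fun _ _ => trivial, fun _ hp => (h₁.labF hp trivial).elim⟩, ?_, ?_⟩
  · rintro _ ⟨-, rfl⟩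
    obtain ⟨A, hA⟩ := hmust
    obtain ⟨t, rfl⟩ := hM _ _ hA
    exact ⟨t, M.must_may _ _ hA t rfl, aToA_false_le_of_must h₁ h₂ hA⟩
  · intro A hA
    obtain ⟨t, rfl⟩ := hM _ _ hA
    exact ⟨{false}, ⟨false, rfl, rfl, rfl⟩,
      fun _ h => ⟨t, rfl, h ▸ aToA_false_le_of_must h₁ h₂ hA⟩⟩

theorem deadA_le_of_not_must (h₁ : MixLe loopA () M m) (hmust : ∀ A, ¬ M.must m A) :
    MixLe deadA () M m :=
  mixLe_of_deadlock (fun _ _ => trivial) (fun _ hp => (h₁.labF hp trivial).elim)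
    (fun _ h => h) hmust

end KMTS

/-- No KMTS state has the same set of Kripke-Structure concretisations as the
GTS state `⟨G,s⟩`: GTSs are strictly more expressive than KMTSs. -/
theorem gts_strictly_more_expressive (σ : Type) (M : GTS σ Unit) (hM : IsKMTS M)
    (sM : σ) :
    ¬ (∀ (τ : Type) (K : GTS τ Unit), IsKS K → ∀ sK : τ,
        (MixLe K sK M sM ↔ MixLe K sK G GS.s)) := by
  intro hiff
  have h₁ : MixLe loopA () M sM := (hiff _ _ (GTS.isKS_ofKripke _ _) ()).mpr loopA_le_G
  have h₂ : MixLe aToNotA true M sM := (hiff _ _ (GTS.isKS_ofKripke _ _) true).mpr aToNotA_le_G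
  by_cases hmust : ∃ A, M.must sM A
  · exact aToA_not_le_G <|
      (hiff _ _ (GTS.isKS_ofKripke _ _) true).mp (aToA_le_of_must hM h₁ h₂ hmust)
  · push Not at hmust
    exact deadA_not_le_G <|
      (hiff _ _ (GTS.isKS_ofKripke _ _) ()).mp (deadA_le_of_not_must h₁ hmust)
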